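/- Let (Ω, μ) be a measure space with σ-finite measure μ, and let p, q, g, h : Ω → ℝ be measurable functions such that for all ω: p(ω) > 0, q(ω) > 0, g(ω) > 0, 0 < h(ω) < 1, and p(ω) ≤ C·q(ω) for a constant C > 0. Assume that the functions ω ↦ p(ω)·log(p(ω)/(g(ω)·h(ω))), ω ↦ p(ω)·log(p(ω)/(g(ω)·q(ω))), ω ↦ q(ω)·log(q(ω)/h(ω)), ω ↦ p(ω)·log q(ω), ω ↦ q(ω)·log q(ω) and ω ↦ p(ω)·log h(ω) are all μ-integrable. Then ∫ p·log(p/(g·h)) dμ ≤ ∫ p·log(p/(g·q)) dμ + C·∫ q·log(q/h) dμ + C', where C' = ∫ p·log q dμ − C·∫ q·log q dμ. -/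
import Mathlib


open MeasureTheory

theorem transfer_learning_upper_bound
    {Ω : Type*} [MeasurableSpace Ω] (μ : Measure Ω) [SigmaFinite μ]
    (p q g h : Ω → ℝ) (C : ℝ) (hC : 0 < C)
    (hpm : Measurable p) (hqm : Measurable q) (hgm : Measurable g) (hhm : Measurable h)
    (hp0 : ∀ ω, 0 < p ω) (hq0 : ∀ ω, 0 < q ω) (hg0 : ∀ ω, 0 < g ω)
    (hh0 : ∀ ω, 0 < h ω) (hh1 : ∀ ω, h ω < 1)
    (hpq : ∀ ω, p ω ≤ C * q ω)
    (i1 : Integrable (fun ω => p ω * Real.log (p ω / (g ω * h ω))) μ)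
    (i2 : Integrable (fun ω => p ω * Real.log (p ω / (g ω * q ω))) μ)
    (i3 : Integrable (fun ω => q ω * Real.log (q ω / h ω)) μ)
    (i4 : Integrable (fun ω => p ω * Real.log (q ω)) μ)
    (i5 : Integrable (fun ω => q ω * Real.log (q ω)) μ)
    (i6 : Integrable (fun ω => p ω * Real.log (h ω)) μ) :
    ∫ ω, p ω * Real.log (p ω / (g ω * h ω)) ∂μ ≤
      ∫ ω, p ω * Real.log (p ω / (g ω * q ω)) ∂μ +
      C * ∫ ω, q ω * Real.log (q ω / h ω) ∂μ +
      (∫ ω, p ω * Real.log (q ω) ∂μ - C * ∫ ω, q ω * Real.log (q ω) ∂μ) := by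
  -- pointwise identities
  have key1 : ∀ ω, p ω * Real.log (p ω / (g ω * h ω)) =
      p ω * Real.log (p ω / (g ω * q ω)) + p ω * Real.log (q ω) - p ω * Real.log (h ω) := by
    intro ω
    have hp := (hp0 ω).ne'
    have hq := (hq0 ω).ne'
    have hg := (hg0 ω).ne'
    have hh := (hh0 ω).ne'
    rw [Real.log_div hp (mul_ne_zero hg hh), Real.log_div hp (mul_ne_zero hg hq),
      Real.log_mul hg hh, Real.log_mul hg hq]
    ring
  have key3 : ∀ ω, q ω * Real.log (q ω / h ω) =
      q ω * Real.log (q ω) - q ω * Real.log (h ω) := by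
    intro ω
    rw [Real.log_div (hq0 ω).ne' (hh0 ω).ne']
    ring
  have h1 : ∫ ω, p ω * Real.log (p ω / (g ω * h ω)) ∂μ =
      ∫ ω, p ω * Real.log (p ω / (g ω * q ω)) ∂μ +
      ∫ ω, p ω * Real.log (q ω) ∂μ - ∫ ω, p ω * Real.log (h ω) ∂μ := by
    rw [integral_congr_ae (Filter.Eventually.of_forall key1),
      integral_sub ?_ i6, integral_add i2 i4]
    exact i2.add i4
  have iqh : Integrable (fun ω => q ω * Real.log (h ω)) μ := by
    have : (fun ω => q ω * Real.log (h ω)) =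
        fun ω => q ω * Real.log (q ω) - q ω * Real.log (q ω / h ω) := by
      funext ω; rw [key3 ω]; ring
    rw [this]; exact i5.sub i3
  have h3 : ∫ ω, q ω * Real.log (q ω / h ω) ∂μ =
      ∫ ω, q ω * Real.log (q ω) ∂μ - ∫ ω, q ω * Real.log (h ω) ∂μ := by
    rw [← integral_sub i5 iqh]
    exact integral_congr_ae (Filter.Eventually.of_forall key3)
  -- main inequality: C * ∫ q log h ≤ ∫ p log h
  have hmono : C * ∫ ω, q ω * Real.log (h ω) ∂μ ≤ ∫ ω, p ω * Real.log (h ω) ∂μ := by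
    rw [← integral_const_mul]
    refine integral_mono (iqh.const_mul C) i6 ?_
    intro ω
    have hlog : Real.log (h ω) ≤ 0 := Real.log_nonpos (hh0 ω).le (hh1 ω).le
    have := mul_le_mul_of_nonpos_right (hpq ω) hlog
    simpa [mul_assoc] using this
  rw [h1, h3]
  nlinarith [hmono]
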